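/- The equation $3^x + 13^y = 2200^z$ has exactly two solutions in positive integers $(x,y,z)$, namely $(x,y,z) = (1,3,1)$ and $(x,y,z) = (7,1,1)$. -/
import Mathlib

lemma pow_mod_cycle (a n d : ℕ) (h : a ^ d % n = 1 % n) (x : ℕ) :
    a ^ x % n = a ^ (x % d) % n := by
  conv_lhs => rw [← Nat.div_add_mod x d, pow_add, pow_mul]
  rw [Nat.mul_mod, Nat.pow_mod, h, ← Nat.pow_mod, one_pow, ← Nat.mul_mod, one_mul]

/-- The equation `3^x + 13^y = 2200^z` has exactly the two positive solutions
`(1,3,1)` and `(7,1,1)`. -/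
theorem stmt_5 (x y z : ℕ) (hx : 0 < x) (hy : 0 < y) (hz : 0 < z) :
    3 ^ x + 13 ^ y = 2200 ^ z ↔ ((x, y, z) = (1, 3, 1) ∨ (x, y, z) = (7, 1, 1)) := by
  constructor
  · intro h
    -- First show z = 1
    have hz1 : z = 1 := by
      by_contra hzn
      have hz2 : 2 ≤ z := by omega
      -- mod 5
      have h5 : (3 ^ x + 13 ^ y) % 5 = 0 := by
        rw [h]
        have : 2200 ^ z = 2200 * 2200 ^ (z - 1) := by
          rw [← pow_succ']; congr 1; omega
        rw [this, Nat.mul_mod]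
        norm_num
      -- mod 16
      have h16 : (3 ^ x + 13 ^ y) % 16 = 0 := by
        rw [h]
        have : 2200 ^ z = 2200 ^ 2 * 2200 ^ (z - 2) := by
          rw [← pow_add]; congr 1; omega
        rw [this, Nat.mul_mod]
        norm_num
      rw [Nat.add_mod, pow_mod_cycle 3 5 4 (by norm_num) x,
        pow_mod_cycle 13 5 4 (by norm_num) y] at h5
      rw [Nat.add_mod, pow_mod_cycle 3 16 4 (by norm_num) x,
        pow_mod_cycle 13 16 4 (by norm_num) y] at h16
      have ha : x % 4 < 4 := Nat.mod_lt _ (by norm_num)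
      have hb : y % 4 < 4 := Nat.mod_lt _ (by norm_num)
      set a := x % 4 with hadef
      set b := y % 4 with hbdef
      interval_cases a <;> interval_cases b <;> revert h5 h16 <;> decide
    subst hz1
    norm_num at h
    -- bounds
    have hxb : x ≤ 7 := by
      by_contra h'
      have h8 : 8 ≤ x := by omega
      have := Nat.pow_le_pow_right (show 1 ≤ 3 by norm_num) h8
      norm_num at this
      have h13 : 1 ≤ 13 ^ y := Nat.one_le_pow _ _ (by norm_num)
      omega
    have hyb : y ≤ 3 := by
      by_contra h'
      have h4 : 4 ≤ y := by omega
      have := Nat.pow_le_pow_right (show 1 ≤ 13 by norm_num) h4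
      norm_num at this
      have h3 : 1 ≤ 3 ^ x := Nat.one_le_pow _ _ (by norm_num)
      omega
    interval_cases x <;> interval_cases y <;>
      first
        | (left; rfl)
        | (right; rfl)
        | (norm_num at h)
  · rintro (h | h) <;>
    · simp only [Prod.mk.injEq] at h
      obtain ⟨h1, h2, h3⟩ := h
      subst h1; subst h2; subst h3
      norm_num
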